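/- Let V(ρ) = 72(36 − 14√6 + (√6 − 2)ρ²)/(36 − 14√6 + √6 ρ²)², a₁ = (1/2)√(3/2), a₂ = (1/2)(18 − 7√6), and 𝐠(ρ) = (a₁ρ² + a₂)^{−2}. Then there is no function u ∈ C([0,∞), ℂ) ∩ C²((0,∞), ℂ) satisfying u''(ρ) + (6/ρ) u'(ρ) − (1/2) ρ u'(ρ) + V(ρ) u(ρ) − 2 u(ρ) = 𝐠(ρ) for all ρ > 0 together with lim_{ρ→∞} ρ^{3/2} |u(ρ)| = 0. -/

import Mathlib

open Set Filter Topology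

noncomputable section

/-- The potential `V(ρ) = 72(36 − 14√6 + (√6 − 2)ρ²)/(36 − 14√6 + √6 ρ²)²`. -/
def Vpot (ρ : ℝ) : ℝ :=
  72 * (36 - 14 * Real.sqrt 6 + (Real.sqrt 6 - 2) * ρ^2) /
    (36 - 14 * Real.sqrt 6 + Real.sqrt 6 * ρ^2)^2

/-- `a₁ = (1/2)√(3/2)`. -/
def a1 : ℝ := (1/2) * Real.sqrt (3/2)

/-- `a₂ = (1/2)(18 − 7√6)`. -/
def a2 : ℝ := (1/2) * (18 - 7 * Real.sqrt 6)

/-- The symmetry mode `𝐠(ρ) = (a₁ρ² + a₂)^{−2}`. -/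
def gsym (ρ : ℝ) : ℝ := 1 / (a1 * ρ^2 + a2)^2


lemma s_sq : (Real.sqrt 6)^2 = 6 := Real.sq_sqrt (by norm_num)
lemma s_pos : 0 < Real.sqrt 6 := Real.sqrt_pos.mpr (by norm_num)
lemma s_lt : Real.sqrt 6 < 5/2 := by nlinarith [s_sq, s_pos]
lemma s_gt : 2 < Real.sqrt 6 := by nlinarith [s_sq, s_pos]
lemma ha1 : a1 = Real.sqrt 6 / 4 := by
  have h : Real.sqrt (3/2) = Real.sqrt 6 / 2 := by
    have : (3:ℝ)/2 = (Real.sqrt 6 / 2)^2 := by nlinarith [s_sq]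
    rw [this, Real.sqrt_sq (by positivity)]
  rw [a1, h]; ring
lemma ha2 : a2 = 9 - 7 * Real.sqrt 6 / 2 := by rw [a2]; ring
lemma a1_pos : 0 < a1 := by rw [ha1]; positivity
lemma a2_pos : 0 < a2 := by rw [ha2]; nlinarith [s_lt, s_pos]
lemma q_pos (ρ : ℝ) : 0 < a1 * ρ^2 + a2 := by
  have := a1_pos; have := a2_pos; positivity

def gd1 (ρ : ℝ) : ℝ := -4 * a1 * ρ / (a1 * ρ^2 + a2)^3
def gd2 (ρ : ℝ) : ℝ := -4 * a1 / (a1 * ρ^2 + a2)^3 + 24 * a1^2 * ρ^2 / (a1 * ρ^2 + a2)^4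
def wf (ρ : ℝ) : ℝ := ρ^6 * Real.exp (-ρ^2/4)
def wd1 (ρ : ℝ) : ℝ := (6 * ρ^5 - ρ^7/2) * Real.exp (-ρ^2/4)

lemma hasDerivAt_q (ρ : ℝ) : HasDerivAt (fun ρ => a1 * ρ^2 + a2) (2 * a1 * ρ) ρ := by
  have := ((hasDerivAt_pow 2 ρ).const_mul a1).add_const a2
  refine this.congr_deriv ?_
  ring

lemma hasDerivAt_gsym (ρ : ℝ) : HasDerivAt gsym (gd1 ρ) ρ := by
  have hq := hasDerivAt_q ρ
  have hq2 : HasDerivAt (fun ρ => (a1 * ρ^2 + a2)^2) (2 * (a1*ρ^2+a2) * (2*a1*ρ)) ρ := by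
    exact (hq.pow 2).congr_deriv (by push_cast; ring)
  have := hq2.inv (pow_pos (q_pos ρ) 2).ne'
  have h2 : HasDerivAt (fun ρ => ((a1 * ρ^2 + a2)^2)⁻¹)
      (-(2 * (a1*ρ^2+a2) * (2*a1*ρ)) / ((a1*ρ^2+a2)^2)^2) ρ := by
    exact this
  have heq : gsym = fun ρ => ((a1 * ρ^2 + a2)^2)⁻¹ := by
    funext x; simp [gsym, one_div]
  rw [heq]
  convert h2 using 1
  have h0 := (q_pos ρ).ne'
  rw [gd1]
  field_simp
  ring

lemma hasDerivAt_gd1 (ρ : ℝ) : HasDerivAt gd1 (gd2 ρ) ρ := by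
  have hq := hasDerivAt_q ρ
  have hq3 : HasDerivAt (fun ρ => (a1 * ρ^2 + a2)^3) (3 * (a1*ρ^2+a2)^2 * (2*a1*ρ)) ρ := by
    exact (hq.pow 3).congr_deriv (by push_cast; ring)
  have hnum : HasDerivAt (fun ρ : ℝ => -4 * a1 * ρ) (-4 * a1) ρ := by
    simpa using (hasDerivAt_id ρ).const_mul (-4 * a1)
  have h0 := (q_pos ρ).ne'
  have := hnum.div hq3 (pow_pos (q_pos ρ) 3).ne'
  refine this.congr_deriv ?_
  rw [gd2]
  field_simp
  ring

lemma hasDerivAt_wf (ρ : ℝ) : HasDerivAt wf (wd1 ρ) ρ := by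
  have he : HasDerivAt (fun ρ : ℝ => Real.exp (-ρ^2/4)) (Real.exp (-ρ^2/4) * (-ρ/2)) ρ := by
    have hin : HasDerivAt (fun ρ : ℝ => -ρ^2/4) (-ρ/2) ρ := by
      have := (hasDerivAt_pow 2 ρ).neg.div_const 4
      refine this.congr_deriv ?_; ring
    exact hin.exp
  have := (hasDerivAt_pow 6 ρ).mul he
  refine this.congr_deriv ?_
  simp [wd1]
  ring

lemma hV (ρ : ℝ) : Vpot ρ = (18*(a1*ρ^2+a2) - 9*ρ^2)/(a1*ρ^2+a2)^2 := by
  have hq := (q_pos ρ).ne'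
  have hden : (36 - 14 * Real.sqrt 6 + Real.sqrt 6 * ρ^2) = 4 * (a1 * ρ^2 + a2) := by
    rw [ha1, ha2]; ring
  have hnum : (36 - 14 * Real.sqrt 6 + (Real.sqrt 6 - 2) * ρ^2)
      = 4 * (a1 * ρ^2 + a2) - 2*ρ^2 := by
    rw [ha1, ha2]; ring
  rw [Vpot, hden, hnum]
  field_simp
  ring

lemma key_poly (ρ : ℝ) :
    -28*a1*(a1*ρ^2+a2) + 24*a1^2*ρ^2 + 2*a1*ρ^2*(a1*ρ^2+a2) + 18*(a1*ρ^2+a2)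
      - 9*ρ^2 - 2*(a1*ρ^2+a2)^2 = 0 := by
  rw [ha1, ha2]
  linear_combination (3/2) * ρ^2 * s_sq

lemma hom_ode (ρ : ℝ) (hρ : 0 < ρ) :
    gd2 ρ + (6/ρ - ρ/2) * gd1 ρ + (Vpot ρ - 2) * gsym ρ = 0 := by
  have hq := (q_pos ρ).ne'
  have hρ' := hρ.ne'
  have hE : gd2 ρ + (6/ρ - ρ/2) * gd1 ρ + (Vpot ρ - 2) * gsym ρ
      = (-28*a1*(a1*ρ^2+a2) + 24*a1^2*ρ^2 + 2*a1*ρ^2*(a1*ρ^2+a2) + 18*(a1*ρ^2+a2)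
        - 9*ρ^2 - 2*(a1*ρ^2+a2)^2)/(a1*ρ^2+a2)^4 := by
    rw [hV, gd2, gd1, gsym]
    field_simp
    ring
  rw [hE, key_poly]
  simp

lemma wd1_eq (ρ : ℝ) (hρ : 0 < ρ) : wd1 ρ = (6/ρ - ρ/2) * wf ρ := by
  rw [wd1, wf]
  field_simp


lemma gsym_pos (ρ : ℝ) : 0 < gsym ρ := by
  rw [gsym]; have := q_pos ρ; positivity

lemma gsym_le (ρ : ℝ) : gsym ρ ≤ 1/a2^2 := by
  rw [gsym]
  have hq := q_pos ρ
  have ha := a2_pos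
  have h1 : a2 ≤ a1*ρ^2 + a2 := by nlinarith [a1_pos, sq_nonneg ρ]
  have h2 : a2^2 ≤ (a1*ρ^2+a2)^2 := by nlinarith
  exact div_le_div_of_nonneg_left one_pos.le (by positivity) h2

lemma wf_pos (ρ : ℝ) (hρ : 0 < ρ) : 0 < wf ρ := by
  rw [wf]; positivity

lemma wf_nonneg (ρ : ℝ) (hρ : 0 ≤ ρ) : 0 ≤ wf ρ := by
  rw [wf]; positivity

lemma wf_le (ρ : ℝ) (hρ : 0 ≤ ρ) : wf ρ ≤ ρ^6 := by
  rw [wf]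
  have h1 : Real.exp (-ρ^2/4) ≤ 1 := Real.exp_le_one_iff.mpr (by nlinarith [sq_nonneg ρ])
  nlinarith [pow_nonneg hρ 6, Real.exp_pos (-ρ^2/4)]

lemma gd1_abs (ρ : ℝ) (hρ : 0 ≤ ρ) : |gd1 ρ| ≤ (4*a1/a2^3) * ρ := by
  rw [gd1]
  have hq := q_pos ρ
  have ha := a2_pos
  have ha1 := a1_pos
  have h1 : a2 ≤ a1*ρ^2 + a2 := by nlinarith [sq_nonneg ρ]
  have h3 : a2^3 ≤ (a1*ρ^2+a2)^3 := pow_le_pow_left₀ ha.le h1 3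
  rw [abs_div, abs_of_pos (by positivity : (0:ℝ) < (a1*ρ^2+a2)^3)]
  have hnum : |(-4) * a1 * ρ| = 4*a1*ρ := by
    rw [abs_of_nonpos (by nlinarith : (-4)*a1*ρ ≤ 0)]; ring
  rw [hnum]
  rw [div_le_iff₀ (by positivity)]
  have heq : 4*a1/a2^3 * ρ * (a1*ρ^2+a2)^3 = (4*a1*ρ) * ((a1*ρ^2+a2)^3/a2^3) := by
    field_simp
  rw [heq]
  have h4 : (1:ℝ) ≤ (a1*ρ^2+a2)^3/a2^3 := by
    rw [le_div_iff₀ (by positivity)]; linarith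
  nlinarith [mul_nonneg (mul_nonneg (by norm_num : (0:ℝ) ≤ 4) ha1.le) hρ]

lemma exp_bound (ρ : ℝ) (hρ : 1 ≤ ρ) : ρ^7 * Real.exp (-ρ^2/4) ≤ 32^8/ρ := by
  have hρ0 : (0:ℝ) < ρ := by linarith
  have hx : ρ^2/32 ≤ Real.exp (ρ^2/32) := by linarith [Real.add_one_le_exp (ρ^2/32)]
  have h8 : Real.exp (ρ^2/4) = (Real.exp (ρ^2/32))^8 := by
    rw [← Real.exp_nat_mul]; ring_nf
  have hge : (ρ^2/32)^8 ≤ Real.exp (ρ^2/4) := by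
    rw [h8]; exact pow_le_pow_left₀ (by positivity) hx 8
  have hE : Real.exp (-ρ^2/4) * Real.exp (ρ^2/4) = 1 := by
    rw [← Real.exp_add]; ring_nf; exact Real.exp_zero
  have hEneg := (Real.exp_pos (-ρ^2/4)).le
  rw [le_div_iff₀ hρ0]
  have h16 : ρ^16/32^8 ≤ Real.exp (ρ^2/4) := by nlinarith [hge]
  have key : Real.exp (-ρ^2/4) * ρ^16 ≤ 32^8 := by
    nlinarith [mul_le_mul_of_nonneg_left h16 hEneg]
  have hpow : ρ^8 ≤ ρ^16 := pow_le_pow_right₀ hρ (by norm_num)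
  nlinarith [mul_le_mul_of_nonneg_left hpow hEneg]

lemma hasDerivAt_Phi (u : ℝ → ℂ)
    (hode : ∀ ρ : ℝ, 0 < ρ →
        deriv (deriv u) ρ + (6/ρ : ℝ) * deriv u ρ - ((1/2 : ℝ) * ρ : ℝ) * deriv u ρ
          + (Vpot ρ : ℂ) * u ρ - 2 * u ρ = (gsym ρ : ℂ))
    (ρ : ℝ) (hρ : 0 < ρ)
    (hu1 : HasDerivAt u (deriv u ρ) ρ)
    (hu2 : HasDerivAt (deriv u) (deriv (deriv u) ρ) ρ) :
    HasDerivAt (fun x => ((wf x * gsym x : ℝ) : ℂ) * deriv u x - ((wf x * gd1 x : ℝ) : ℂ) * u x)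
      ((wf ρ * gsym ρ^2 : ℝ) : ℂ) ρ := by
  have hρC : (ρ:ℂ) ≠ 0 := by exact_mod_cast hρ.ne'
  have hW1 : HasDerivAt (fun x => wf x * gsym x) (wd1 ρ * gsym ρ + wf ρ * gd1 ρ) ρ :=
    (hasDerivAt_wf ρ).mul (hasDerivAt_gsym ρ)
  have hW2 : HasDerivAt (fun x => wf x * gd1 x) (wd1 ρ * gd1 ρ + wf ρ * gd2 ρ) ρ :=
    (hasDerivAt_wf ρ).mul (hasDerivAt_gd1 ρ)
  have h := ((hW1.ofReal_comp).mul hu2).sub ((hW2.ofReal_comp).mul hu1)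
  have H1 := hode ρ hρ
  push_cast at H1
  have H2 : (gd2 ρ : ℂ) + ((6:ℂ)/ρ - ρ/2) * gd1 ρ + ((Vpot ρ : ℂ) - 2) * gsym ρ = 0 := by
    have h := congrArg (Complex.ofReal) (hom_ode ρ hρ)
    push_cast at h
    convert h using 1
  have H3 : (wd1 ρ : ℂ) = ((6:ℂ)/ρ - ρ/2) * wf ρ := by
    have h := congrArg (Complex.ofReal) (wd1_eq ρ hρ)
    push_cast at h
    convert h using 1
  refine h.congr_deriv (Eq.symm ?_)
  push_cast
  linear_combination (-(wf ρ : ℂ) * (gsym ρ : ℂ)) * H1 + (wf ρ : ℂ) * u ρ * H2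
    - ((gsym ρ : ℂ) * (deriv u ρ : ℂ) - (gd1 ρ : ℂ) * u ρ) * H3

set_option maxHeartbeats 2000000 in
/-- There is no `u ∈ C([0,∞),ℂ) ∩ C²((0,∞),ℂ)` solving
`u'' + (6/ρ)u' − (1/2)ρu' + Vu − 2u = 𝐠` on `(0,∞)` with
`ρ^{3/2}|u(ρ)| → 0` as `ρ → ∞`. -/
theorem stmt15 :
    ¬ ∃ u : ℝ → ℂ,
      ContinuousOn u (Ici 0) ∧ ContDiffOn ℝ 2 u (Ioi 0) ∧
      (∀ ρ : ℝ, 0 < ρ →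
        deriv (deriv u) ρ + (6/ρ : ℝ) * deriv u ρ - ((1/2 : ℝ) * ρ : ℝ) * deriv u ρ
          + (Vpot ρ : ℂ) * u ρ - 2 * u ρ = (gsym ρ : ℂ)) ∧
      Tendsto (fun ρ : ℝ => ρ ^ ((3:ℝ)/2) * ‖u ρ‖) atTop (𝓝 0) := by
  rintro ⟨u, hcont, hC2, hode, hdecay⟩
  have hd1 : DifferentiableOn ℝ u (Ioi 0) := hC2.differentiableOn (by norm_num)
  have hC1 : ContDiffOn ℝ 1 (deriv u) (Ioi 0) := hC2.deriv_of_isOpen isOpen_Ioi (by norm_num)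
  have hd2 : DifferentiableOn ℝ (deriv u) (Ioi 0) := hC1.differentiableOn (by norm_num)
  have hu1 : ∀ ρ : ℝ, 0 < ρ → HasDerivAt u (deriv u ρ) ρ := fun ρ hρ =>
    (hd1.differentiableAt (isOpen_Ioi.mem_nhds hρ)).hasDerivAt
  have hu2 : ∀ ρ : ℝ, 0 < ρ → HasDerivAt (deriv u) (deriv (deriv u) ρ) ρ := fun ρ hρ =>
    (hd2.differentiableAt (isOpen_Ioi.mem_nhds hρ)).hasDerivAt
  obtain ⟨F, hFdef⟩ : ∃ F : ℝ → ℝ, F = fun x =>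
      wf x * gsym x * (deriv u x).re - wf x * gd1 x * (u x).re := ⟨_, rfl⟩
  have hF : ∀ ρ : ℝ, 0 < ρ → HasDerivAt F (wf ρ * gsym ρ^2) ρ := by
    intro ρ hρ
    have h := Complex.reCLM.hasFDerivAt.comp_hasDerivAt ρ
      (hasDerivAt_Phi u hode ρ hρ (hu1 ρ hρ) (hu2 ρ hρ))
    have heq : F = ⇑Complex.reCLM ∘ (fun x =>
        ((wf x * gsym x : ℝ) : ℂ) * deriv u x - ((wf x * gd1 x : ℝ) : ℂ) * u x) := by
      funext x
      simp [hFdef, Complex.sub_re, Complex.re_ofReal_mul]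
    rw [heq]
    exact h.congr_deriv (by simp only [Complex.reCLM_apply, Complex.ofReal_re])
  have hmono : StrictMonoOn F (Ioi 0) := by
    apply strictMonoOn_of_deriv_pos (convex_Ioi 0)
    · exact fun x hx => ((hF x hx).continuousAt.continuousWithinAt)
    · intro x hx
      rw [interior_Ioi] at hx
      rw [(hF x hx).deriv]
      exact mul_pos (wf_pos x hx) (pow_pos (gsym_pos x) 2)
  -- bound for u on [0,1]
  obtain ⟨M, hM⟩ := isCompact_Icc.exists_bound_of_continuousOn
    (hcont.mono (Icc_subset_Ici_self : Icc (0:ℝ) 1 ⊆ Ici 0))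
  have hM0 : 0 ≤ M := le_trans (norm_nonneg _) (hM 0 (by constructor <;> norm_num))
  have hRe : ∀ ρ : ℝ, 0 < ρ → HasDerivAt (fun x => (u x).re) ((deriv u ρ).re) ρ := by
    intro ρ hρ
    exact Complex.reCLM.hasFDerivAt.comp_hasDerivAt ρ (hu1 ρ hρ)
  -- Step A : 0 ≤ F 1
  have hA : 0 ≤ F 1 := by
    by_contra hneg
    push_neg at hneg
    obtain ⟨ε, hεdef⟩ : ∃ e : ℝ, e = -F 1 := ⟨_, rfl⟩
    have hε : 0 < ε := by rw [hεdef]; linarith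
    obtain ⟨C, hCdef⟩ : ∃ c : ℝ, c = (4*a1/a2^3) * M := ⟨_, rfl⟩
    have hC0 : 0 ≤ C := by
      have := a1_pos; have := a2_pos
      rw [hCdef]; positivity
    obtain ⟨δ, hδdef⟩ : ∃ d : ℝ, d = min 1 (ε/(2*(C+1))) := ⟨_, rfl⟩
    have hδpos : 0 < δ := by rw [hδdef]; exact lt_min one_pos (by positivity)
    have hδ1 : δ ≤ 1 := by rw [hδdef]; exact min_le_left _ _
    have hδ2 : δ ≤ ε/(2*(C+1)) := by rw [hδdef]; exact min_le_right _ _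
    -- pointwise derivative bound on (0, δ]
    have hkey : ∀ ρ ∈ Ioc (0:ℝ) δ, (deriv u ρ).re ≤ (-(ε*a2^2/2))/ρ^6 := by
      rintro ρ ⟨hρ0, hρδ⟩
      have hρ1 : ρ ≤ 1 := hρδ.trans hδ1
      have hFρ : F ρ ≤ -ε := by
        have h := hmono.monotoneOn (mem_Ioi.mpr hρ0) (mem_Ioi.mpr one_pos) hρ1
        rw [hεdef]; linarith
      have hunorm : ‖u ρ‖ ≤ M := hM ρ ⟨hρ0.le, hρ1⟩
      have hre : |(u ρ).re| ≤ M :=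
        le_trans (Complex.abs_re_le_norm _) (by exact hunorm)
      have hwfle : wf ρ ≤ 1 := le_trans (wf_le ρ hρ0.le) (pow_le_one₀ hρ0.le hρ1)
      have hgd1 := gd1_abs ρ hρ0.le
      have hterm : |wf ρ * gd1 ρ * (u ρ).re| ≤ C * ρ := by
        rw [abs_mul, abs_mul, abs_of_nonneg (wf_nonneg ρ hρ0.le)]
        have h1 : wf ρ * |gd1 ρ| ≤ (4*a1/a2^3) * ρ := by
          nlinarith [abs_nonneg (gd1 ρ), wf_nonneg ρ hρ0.le, a1_pos, a2_pos,
            mul_pos (mul_pos (by norm_num : (0:ℝ) < 4) a1_pos) hρ0]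
        calc wf ρ * |gd1 ρ| * |(u ρ).re| ≤ ((4*a1/a2^3) * ρ) * M := by
              exact mul_le_mul h1 hre (abs_nonneg _)
                (mul_nonneg (div_nonneg (by nlinarith [a1_pos] : (0:ℝ) ≤ 4*a1)
                  (pow_nonneg a2_pos.le 3)) hρ0.le)
          _ = C * ρ := by rw [hCdef]; ring
      have hCρ : C * ρ ≤ ε/2 := by
        have h1 : C * ρ ≤ C * (ε/(2*(C+1))) :=
          mul_le_mul_of_nonneg_left (hρδ.trans hδ2) hC0
        have h2 : C * (ε/(2*(C+1))) ≤ ε/2 := by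
          have hpos : (0:ℝ) < 2*(C+1) := by linarith
          rw [← mul_div_assoc, div_le_iff₀ hpos]
          nlinarith
        linarith
      have hwg : wf ρ * gsym ρ * (deriv u ρ).re ≤ -(ε/2) := by
        have hF2 : F ρ = wf ρ * gsym ρ * (deriv u ρ).re - wf ρ * gd1 ρ * (u ρ).re := by
          rw [hFdef]
        have habs : wf ρ * gd1 ρ * (u ρ).re ≤ C * ρ := le_trans (le_abs_self _) hterm
        linarith
      have hP : 0 < wf ρ * gsym ρ := mul_pos (wf_pos ρ hρ0) (gsym_pos ρ)
      have hPle : wf ρ * gsym ρ * a2^2 ≤ ρ^6 := by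
        have h1 := wf_le ρ hρ0.le
        have h2 := gsym_le ρ
        have h3 : gsym ρ * a2^2 ≤ 1 := by
          have ha2 := a2_pos
          have := (le_div_iff₀ (by positivity : (0:ℝ) < a2^2)).mp (gsym_le ρ)
          linarith
        nlinarith [wf_nonneg ρ hρ0.le, (gsym_pos ρ).le, a2_pos, pow_nonneg hρ0.le 6]
      rw [le_div_iff₀ (pow_pos hρ0 6)]
      have hRneg : (deriv u ρ).re < 0 := by
        by_contra h
        push_neg at h
        nlinarith [mul_nonneg hP.le h]
      nlinarith [mul_le_mul_of_nonpos_left hPle hRneg.le]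
    -- antitone auxiliary function
    obtain ⟨c5, hc5def⟩ : ∃ c : ℝ, c = ε*a2^2/10 := ⟨_, rfl⟩
    have hc5 : 0 < c5 := by have := a2_pos; rw [hc5def]; positivity
    have hq5 : ∀ x : ℝ, 0 < x → HasDerivAt (fun y : ℝ => c5/y^5) (-(5*c5/x^6)) x := by
      intro x hx
      have h := (hasDerivAt_const x c5).div (hasDerivAt_pow 5 x) (pow_ne_zero 5 hx.ne')
      refine h.congr_deriv ?_
      field_simp
      ring
    obtain ⟨ψ, hψdef⟩ : ∃ p : ℝ → ℝ, p = fun x => (u x).re - c5/x^5 := ⟨_, rfl⟩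
    have hψd : ∀ x : ℝ, 0 < x → HasDerivAt ψ ((deriv u x).re + 5*c5/x^6) x := by
      intro x hx
      have h := (hRe x hx).sub (hq5 x hx)
      rw [hψdef]
      refine h.congr_deriv ?_
      ring
    have hanti : AntitoneOn ψ (Ioc 0 δ) := by
      apply antitoneOn_of_deriv_nonpos (convex_Ioc 0 δ)
      · exact fun x hx => ((hψd x hx.1).continuousAt.continuousWithinAt)
      · intro x hx
        rw [interior_Ioc] at hx
        exact ((hψd x hx.1).differentiableAt).differentiableWithinAt
      · intro x hx
        rw [interior_Ioc] at hx
        rw [(hψd x hx.1).deriv]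
        have hk := hkey x ⟨hx.1, hx.2.le⟩
        have h5 : 5*c5/x^6 = (ε*a2^2/2)/x^6 := by rw [hc5def]; ring_nf
        have : (-(ε*a2^2/2))/x^6 = -((ε*a2^2/2)/x^6) := by ring
        rw [this] at hk
        linarith [hk, h5.le, h5.ge]
    -- contradiction
    obtain ⟨A, hAdef⟩ : ∃ x : ℝ, x = ψ δ := ⟨_, rfl⟩
    obtain ⟨a, hadef⟩ : ∃ x : ℝ, x = min δ (min 1 (c5/(M + |A| + 1))) := ⟨_, rfl⟩
    have hden : (0:ℝ) < M + |A| + 1 := by positivity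
    have ha0 : 0 < a := by
      rw [hadef]
      exact lt_min hδpos (lt_min one_pos (by positivity))
    have haδ : a ≤ δ := by rw [hadef]; exact min_le_left _ _
    have ha1' : a ≤ 1 := by
      rw [hadef]; exact le_trans (min_le_right _ _) (min_le_left _ _)
    have haT : a ≤ c5/(M + |A| + 1) := by
      rw [hadef]; exact le_trans (min_le_right _ _) (min_le_right _ _)
    have h1 : ψ δ ≤ ψ a := hanti ⟨ha0, haδ⟩ ⟨hδpos, le_refl δ⟩ haδ
    have ha5 : a^5 ≤ a := by
      calc a^5 ≤ a^1 := pow_le_pow_of_le_one ha0.le ha1' (by norm_num)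
        _ = a := pow_one a
    have hd1' : c5/a ≤ c5/a^5 :=
      div_le_div_of_nonneg_left hc5.le (pow_pos ha0 5) ha5
    have hd2' : M + |A| + 1 ≤ c5/a := by
      rw [le_div_iff₀ ha0]
      have := (le_div_iff₀ hden).mp haT
      linarith [this]
    have hua : (u a).re ≤ M :=
      le_trans (Complex.re_le_norm _)
        (by exact hM a ⟨ha0.le, ha1'⟩)
    have hψa : ψ a = (u a).re - c5/a^5 := by rw [hψdef]
    have hψδ : A = ψ δ := hAdef
    have hAA : -|A| ≤ A := neg_abs_le A
    rw [hψa] at h1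
    rw [← hψδ] at h1
    linarith
  -- Step B : contradiction at infinity
  have h12 : F 1 < F 2 := hmono (mem_Ioi.mpr one_pos) (mem_Ioi.mpr two_pos) one_lt_two
  obtain ⟨ε, hεdef⟩ : ∃ e : ℝ, e = F 2 := ⟨_, rfl⟩
  have hε : 0 < ε := by rw [hεdef]; linarith
  have hFge : ∀ ρ : ℝ, 2 ≤ ρ → ε ≤ F ρ := by
    intro ρ h
    rcases eq_or_lt_of_le h with h' | h'
    · rw [hεdef, h']
    · rw [hεdef]
      exact (hmono (mem_Ioi.mpr two_pos) (mem_Ioi.mpr (by linarith)) h').le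
  -- eventual smallness of u
  have hev : ∀ᶠ ρ : ℝ in atTop, ρ ^ ((3:ℝ)/2) * ‖u ρ‖ < 1/2 :=
    hdecay.eventually (gt_mem_nhds (by norm_num))
  obtain ⟨R₀, hR₀⟩ := eventually_atTop.mp hev
  have husmall : ∀ ρ : ℝ, max R₀ 1 ≤ ρ → ‖u ρ‖ ≤ 1/2 := by
    intro ρ hρ
    have h1 : (1:ℝ) ≤ ρ := le_trans (le_max_right _ _) hρ
    have h2 : (1:ℝ) ≤ ρ ^ ((3:ℝ)/2) := Real.one_le_rpow h1 (by norm_num)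
    have h3 := hR₀ ρ (le_trans (le_max_left _ _) hρ)
    nlinarith [norm_nonneg (u ρ)]
  obtain ⟨C₁, hC₁def⟩ : ∃ c : ℝ, c = 32^8*(4*a1/a2^3) := ⟨_, rfl⟩
  obtain ⟨C₂, hC₂def⟩ : ∃ c : ℝ, c = 32^8/a2^2 := ⟨_, rfl⟩
  have hC₁0 : 0 ≤ C₁ := by
    rw [hC₁def]
    have := a1_pos; have := a2_pos
    positivity
  have hC₂0 : 0 ≤ C₂ := by
    rw [hC₂def]
    have := a2_pos
    positivity
  obtain ⟨K₁, hK₁def⟩ : ∃ k : ℝ, k = 2*C₁/ε + 1 := ⟨_, rfl⟩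
  obtain ⟨K₂, hK₂def⟩ : ∃ k : ℝ, k = 2*C₂/ε + 1 := ⟨_, rfl⟩
  have hK₁0 : 0 < K₁ := by rw [hK₁def]; positivity
  have hK₂0 : 0 < K₂ := by rw [hK₂def]; positivity
  obtain ⟨R, hRdef⟩ : ∃ r : ℝ, r = max (max 2 (max R₀ 1)) (max K₁ K₂) := ⟨_, rfl⟩
  have hR2 : (2:ℝ) ≤ R := by rw [hRdef]; exact le_trans (le_max_left _ _) (le_max_left _ _)
  have hR0 : (0:ℝ) < R := by linarith
  have hRmax : max R₀ 1 ≤ R := by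
    rw [hRdef]; exact le_trans (le_max_right _ _) (le_max_left _ _)
  have hRK₁ : K₁ ≤ R := by rw [hRdef]; exact le_trans (le_max_left _ _) (le_max_right _ _)
  have hRK₂ : K₂ ≤ R := by rw [hRdef]; exact le_trans (le_max_right _ _) (le_max_right _ _)
  -- derivative lower bound
  have hRe1 : ∀ ρ : ℝ, R ≤ ρ → 1 ≤ (deriv u ρ).re := by
    intro ρ hρR
    have hρ2 : (2:ℝ) ≤ ρ := le_trans hR2 hρR
    have hρ1 : (1:ℝ) ≤ ρ := by linarith
    have hρ0 : (0:ℝ) < ρ := by linarith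
    have hus : ‖u ρ‖ ≤ 1/2 := husmall ρ (le_trans hRmax hρR)
    have hFρ : ε ≤ F ρ := hFge ρ hρ2
    have hexp := exp_bound ρ hρ1
    have hexp0 := (Real.exp_pos (-ρ^2/4)).le
    -- bound on the second term
    have hterm : |wf ρ * gd1 ρ * (u ρ).re| ≤ C₁/ρ := by
      rw [abs_mul, abs_mul, abs_of_nonneg (wf_nonneg ρ hρ0.le)]
      have hgd1 := gd1_abs ρ hρ0.le
      have hre : |(u ρ).re| ≤ 1/2 :=
        le_trans (Complex.abs_re_le_norm _) (by exact hus)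
      have hwg1 : wf ρ * |gd1 ρ| ≤ (4*a1/a2^3) * (ρ^7 * Real.exp (-ρ^2/4)) := by
        rw [wf]
        have ha1 := a1_pos; have ha2 := a2_pos
        have hc : (0:ℝ) ≤ 4*a1/a2^3 := by positivity
        nlinarith [abs_nonneg (gd1 ρ), pow_nonneg hρ0.le 6, pow_nonneg hρ0.le 7,
          mul_le_mul_of_nonneg_left hgd1 (mul_nonneg (pow_nonneg hρ0.le 6) hexp0)]
      have hca : (0:ℝ) ≤ 4*a1/a2^3 := by
        have := a1_pos; have := a2_pos; positivity
      have h2 : wf ρ * |gd1 ρ| ≤ (4*a1/a2^3) * (32^8/ρ) :=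
        le_trans hwg1 (mul_le_mul_of_nonneg_left hexp hca)
      have h3 : (4*a1/a2^3) * (32^8/ρ) = C₁/ρ := by rw [hC₁def]; ring
      rw [h3] at h2
      have h4 : (0:ℝ) ≤ C₁/ρ := div_nonneg hC₁0 hρ0.le
      nlinarith [mul_nonneg (wf_nonneg ρ hρ0.le) (abs_nonneg (gd1 ρ)),
        mul_le_mul h2 hre (abs_nonneg _) h4]
    have hC₁ρ : C₁/ρ ≤ ε/2 := by
      have h1 : C₁/ρ ≤ C₁/K₁ :=
        div_le_div_of_nonneg_left hC₁0 hK₁0 (le_trans hRK₁ hρR)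
      have h2 : C₁/K₁ ≤ ε/2 := by
        rw [div_le_div_iff₀ hK₁0 (by norm_num), hK₁def]
        have : (0:ℝ) < 2*C₁/ε + 1 := by positivity
        rw [mul_comm, mul_add]
        have h3 : ε * (2*C₁/ε) = 2*C₁ := by field_simp
        nlinarith [h3]
      linarith
    have hwgRe : ε/2 ≤ wf ρ * gsym ρ * (deriv u ρ).re := by
      have hF2 : F ρ = wf ρ * gsym ρ * (deriv u ρ).re - wf ρ * gd1 ρ * (u ρ).re := by
        rw [hFdef]
      have habs : -(C₁/ρ) ≤ wf ρ * gd1 ρ * (u ρ).re := neg_le_of_abs_le hterm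
      linarith
    -- bound on wf * gsym
    have hP : 0 < wf ρ * gsym ρ := mul_pos (wf_pos ρ hρ0) (gsym_pos ρ)
    have hPsmall : wf ρ * gsym ρ ≤ ε/2 := by
      have h1 : wf ρ * gsym ρ ≤ ρ^6 * Real.exp (-ρ^2/4) * (1/a2^2) := by
        have := wf_nonneg ρ hρ0.le
        have h2 := gsym_le ρ
        have h3 : wf ρ = ρ^6 * Real.exp (-ρ^2/4) := rfl
        nlinarith [gsym_pos ρ]
      have h2 : ρ^6 * Real.exp (-ρ^2/4) ≤ ρ^7 * Real.exp (-ρ^2/4) := by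
        have : ρ^6 ≤ ρ^7 := pow_le_pow_right₀ hρ1 (by norm_num)
        nlinarith
      have h3 : ρ^7 * Real.exp (-ρ^2/4) * (1/a2^2) ≤ (32^8/ρ) * (1/a2^2) := by
        have := a2_pos
        apply mul_le_mul_of_nonneg_right hexp
        positivity
      have h4 : (32^8/ρ) * (1/a2^2) = C₂/ρ := by rw [hC₂def]; ring
      have h5 : C₂/ρ ≤ ε/2 := by
        have ha : C₂/ρ ≤ C₂/K₂ :=
          div_le_div_of_nonneg_left hC₂0 hK₂0 (le_trans hRK₂ hρR)
        have hb : C₂/K₂ ≤ ε/2 := by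
          rw [div_le_div_iff₀ hK₂0 (by norm_num), hK₂def]
          have h3' : ε * (2*C₂/ε) = 2*C₂ := by field_simp
          nlinarith [h3']
        linarith
      have h6 : ρ^6 * Real.exp (-ρ^2/4) * (1/a2^2) ≤ ρ^7 * Real.exp (-ρ^2/4) * (1/a2^2) := by
        have := a2_pos
        apply mul_le_mul_of_nonneg_right h2
        positivity
      linarith
    -- conclude 1 ≤ Re (deriv u ρ)
    have := le_of_mul_le_mul_left (a := wf ρ * gsym ρ)
      (by nlinarith : wf ρ * gsym ρ * 1 ≤ wf ρ * gsym ρ * (deriv u ρ).re) hP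
    linarith
  -- monotonicity of Re u - x on [R, ∞)
  obtain ⟨φ, hφdef⟩ : ∃ p : ℝ → ℝ, p = fun x => (u x).re - x := ⟨_, rfl⟩
  have hφd : ∀ x : ℝ, R ≤ x → HasDerivAt φ ((deriv u x).re - 1) x := by
    intro x hx
    have h := (hRe x (by linarith)).sub (hasDerivAt_id x)
    rw [hφdef]
    exact h
  have hφmono : MonotoneOn φ (Ici R) := by
    apply monotoneOn_of_deriv_nonneg (convex_Ici R)
    · exact fun x hx => ((hφd x hx).continuousAt.continuousWithinAt)
    · intro x hx
      rw [interior_Ici] at hx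
      exact ((hφd x hx.le).differentiableAt).differentiableWithinAt
    · intro x hx
      rw [interior_Ici] at hx
      rw [(hφd x hx.le).deriv]
      linarith [hRe1 x hx.le]
  obtain ⟨ρ', hρ'def⟩ : ∃ r : ℝ, r = R + |(u R).re| + 1 := ⟨_, rfl⟩
  have hρ'R : R ≤ ρ' := by rw [hρ'def]; linarith [abs_nonneg ((u R).re)]
  have hm := hφmono (self_mem_Ici) (mem_Ici.mpr hρ'R) hρ'R
  rw [hφdef] at hm
  simp only at hm
  have hre' : (u ρ').re ≤ 1/2 := by
    have h1 := husmall ρ' (le_trans hRmax hρ'R)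
    exact le_trans (Complex.re_le_norm _) (by exact h1)
  have hAA : -|(u R).re| ≤ (u R).re := neg_abs_le _
  rw [hρ'def] at hm
  rw [hρ'def] at hre'
  linarith


end
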